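/- Fix 1 ≤ q < ∞, 1 ≤ s ≤ n and ρ > 0. Let T_{ρ,s}^q = {x ∈ ℂⁿ : ∃ S ⊂ [n] with |S| = s such that ‖x_S‖_q ≥ (ρ/s^{1−1/q}) ‖x_{S^c}‖₁}, and let D_s^q be the convex hull of Σ_s^q = {x ∈ ℂⁿ : ‖x‖₀ ≤ s, ‖x‖_q = 1}. Then T_{ρ,s}^q ∩ B_{ℓ_q^n} ⊂ (2 + ρ^{−1}) D_s^q, where B_{ℓ_q^n} is the unit ball of the ℓ_q-norm on ℂⁿ. -/

import Mathlib

open MeasureTheory ProbabilityTheory Real Finset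
open scoped ENNReal NNReal

noncomputable section

/-- The `ℓ_p` norm of a finite vector, for `p ∈ [1,∞]`. -/
def lpNorm {E : Type*} [NormedAddCommGroup E] {n : ℕ} (p : ℝ≥0∞) (x : Fin n → E) : ℝ :=
  if p = ∞ then ⨆ i, ‖x i‖ else (∑ i, ‖x i‖ ^ p.toReal) ^ (1 / p.toReal)

/-- The `ℓ_p` norm for a finite real exponent `p`. -/
def lpNormR {E : Type*} [NormedAddCommGroup E] {n : ℕ} (p : ℝ) (x : Fin n → E) : ℝ :=
  (∑ i, ‖x i‖ ^ p) ^ (1 / p)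

/-- `‖x‖₀`, the number of nonzero entries of `x`. -/
def sparsity {E : Type*} [Zero E] {n : ℕ} (x : Fin n → E) : ℕ :=
  (Function.support x).ncard

/-- The error of best `s`-term approximation in `ℓ₁`. -/
def sigmaApprox1 {E : Type*} [NormedAddCommGroup E] {n : ℕ} (s : ℕ) (x : Fin n → E) : ℝ :=
  sInf {t | ∃ z : Fin n → E, sparsity z ≤ s ∧ t = lpNormR 1 (x - z)}

/-- Restriction `x_S` of a vector to the coordinates in `S` (zero elsewhere). -/
def restrictS {E : Type*} [Zero E] {n : ℕ} (S : Finset (Fin n)) (x : Fin n → E) : Fin n → E :=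
  fun i => if i ∈ S then x i else 0

/-- The cone `T_{ρ,s}^q`. -/
def coneT (E : Type*) [NormedAddCommGroup E] {n : ℕ} (q ρ : ℝ) (s : ℕ) : Set (Fin n → E) :=
  {x | ∃ S : Finset (Fin n), S.card = s ∧
    ρ / (s : ℝ) ^ (1 - 1/q) * lpNormR 1 (restrictS Sᶜ x) ≤ lpNormR q (restrictS S x)}

/-- The set `Σ_s^q` of unit `ℓ_q`-norm `s`-sparse vectors. -/
def SigmaSparse (E : Type*) [NormedAddCommGroup E] {n : ℕ} (q : ℝ) (s : ℕ) : Set (Fin n → E) :=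
  {x | sparsity x ≤ s ∧ lpNormR q x = 1}

/-- The nonincreasing rearrangement of `(‖x i‖)_i`. -/
def nonincRearrange {E : Type*} [NormedAddCommGroup E] {n : ℕ} (x : Fin n → E) : Fin n → ℝ :=
  fun i => ‖x (Tuple.sort (fun j => -‖x j‖) i)‖

/-- The norm `‖·‖_{D_s^q}` given by sums of `ℓ_q` norms over consecutive blocks of size `s`
of the nonincreasing rearrangement. -/
def DsNorm {n : ℕ} (q : ℝ) (s : ℕ) (x : Fin n → ℂ) : ℝ :=
  ∑ ℓ ∈ Finset.range ((n + s - 1) / s),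
    (∑ i ∈ Finset.univ.filter (fun i : Fin n => s * ℓ ≤ i.val ∧ i.val < s * (ℓ + 1)),
      (nonincRearrange x i) ^ q) ^ (1/q)

/-- A Rademacher sequence: independent random signs. -/
def IsRademacherSeq {Ω : Type*} [MeasurableSpace Ω] (μ : Measure Ω) {m : ℕ}
    (ε : Fin m → Ω → ℝ) : Prop :=
  iIndepFun ε μ ∧
    ∀ i, μ {ω | ε i ω = 1} = 1/2 ∧ μ {ω | ε i ω = -1} = 1/2

/-- The standard Gaussian measure on `ℝⁿ`. -/
def stdGaussian (n : ℕ) : Measure (Fin n → ℝ) :=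
  Measure.pi fun _ => gaussianReal 0 1

/-- complex matrix-vector product for a real matrix -/
def cMulVec {m n : ℕ} (A : Matrix (Fin m) (Fin n) ℝ) (z : Fin n → ℂ) : Fin m → ℂ :=
  (A.map (fun a => (a : ℂ))).mulVec z

end
open scoped Pointwise

noncomputable section

/-- Uniform scalar quantizer with bin width `θ`. -/
def quantize {m : ℕ} (θ : ℝ) (z : Fin m → ℝ) : Fin m → ℝ :=
  fun i => θ * (⌊z i / θ⌋ : ℝ) + θ / 2

/-- The quantization cell `B_θ`. -/
def quantCell (m : ℕ) (θ : ℝ) : Set (Fin m → ℝ) :=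
  {z | ∀ i, -(θ/2) ≤ z i ∧ z i < θ/2}

/-- The Rademacher (symmetric ±1) distribution on `ℝ`. -/
def radMeasure : Measure ℝ :=
  (2 : ℝ≥0∞)⁻¹ • Measure.dirac 1 + (2 : ℝ≥0∞)⁻¹ • Measure.dirac (-1)

/-- The standard symmetric exponential (Laplace) distribution on `ℝ`. -/
def laplaceMeasure : Measure ℝ :=
  MeasureTheory.volume.withDensity fun x => ENNReal.ofReal ((1/2) * Real.exp (-|x|))

/-- The heavy-tailed distribution with density `((γ-1)/(2γ)) min{1, |x|^{-γ}}`. -/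
def heavyMeasure (γ : ℝ) : Measure ℝ :=
  MeasureTheory.volume.withDensity fun x => ENNReal.ofReal (((γ-1)/(2*γ)) * min 1 (|x| ^ (-γ)))

/-- A log-concave measure on `ℝⁿ`. -/
def IsLogConcaveMeasure {n : ℕ} (ν : Measure (Fin n → ℝ)) : Prop :=
  ∀ A B : Set (Fin n → ℝ), MeasurableSet A → MeasurableSet B →
    ∀ θ : ℝ, 0 ≤ θ → θ ≤ 1 →
      ν A ^ θ * ν B ^ (1 - θ) ≤ ν (θ • A + (1 - θ) • B)

/-- An unconditional measure on `ℝⁿ`: invariant under sign flips of the coordinates. -/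
def IsUnconditionalMeasure {n : ℕ} (ν : Measure (Fin n → ℝ)) : Prop :=
  ∀ σ : Fin n → ℝ, (∀ i, σ i = 1 ∨ σ i = -1) →
    Measure.map (fun x i => σ i * x i) ν = ν

/-- An isotropic measure on `ℝⁿ`: mean zero and identity covariance. -/
def IsIsotropicMeasure {n : ℕ} (ν : Measure (Fin n → ℝ)) : Prop :=
  (∫ y, y ∂ν) = 0 ∧ ∀ x : Fin n → ℝ, ∫ y, (∑ j, y j * x j)^2 ∂ν = lpNormR 2 x ^ 2

/-- The semi-norm `‖B‖_s = sup_{x ∈ Σ_s^2} ⟨∑ᵢ Bᵢ, x⟩` on `m × n` matrices,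
where `Bᵢ` are the rows of `B`. -/
def rowSumSupNorm {m n : ℕ} (s : ℕ) (B : Matrix (Fin m) (Fin n) ℝ) : ℝ :=
  ⨆ x ∈ SigmaSparse ℝ 2 s, ∑ j, (∑ i, B i j) * x j

end

/-! Split `x` into blocks `B₀, B₁, …` of `s` coordinates, `B₀` carrying the `s` largest moduli,
`B₁` the next `s`, and so on. Each block, normalised in `ℓ_q`, lies in `Σ_s^q`, so
`x ∈ (∑ₖ ‖x_{Bₖ}‖_q) • D_s^q`, and `0 ∈ D_s^q` lets the factor be enlarged. Every entry on
`B_{k+1}` is at most the average modulus on `Bₖ`, hence `‖x_{B_{k+1}}‖_q ≤ s^{1/q-1} ‖x_{Bₖ}‖₁`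
and `∑ₖ ‖x_{Bₖ}‖_q ≤ ‖x‖_q + s^{1/q-1} ‖x‖₁`. The blocks are peeled off by induction with the
invariant `x ∈ (s^{1/q} ‖x‖_∞ + s^{1/q-1} ‖x‖₁) • D_s^q`. On the cone, Hölder on `S` and the cone
inequality give `‖x‖₁ ≤ (1 + ρ⁻¹) s^{1-1/q} ‖x‖_q`, and `‖x‖_q ≤ 1` turns the bound into
`2 + ρ⁻¹`. -/

open Finset

theorem Convex.smul_subset_smul_of_le {𝕜 V : Type*} [Field 𝕜] [LinearOrder 𝕜]
    [IsStrictOrderedRing 𝕜] [AddCommGroup V] [Module 𝕜 V] {C : Set V} (hC : Convex 𝕜 C)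
    (h0 : 0 ∈ C) {a b : 𝕜} (ha : 0 ≤ a) (hab : a ≤ b) : a • C ⊆ b • C := by
  intro x hx
  have hsplit := hC.add_smul ha (sub_nonneg.2 hab)
  rw [add_sub_cancel] at hsplit
  rw [hsplit, ← add_zero x]
  exact Set.add_mem_add hx (Set.zero_mem_smul_set h0)

/-- Exchange argument: a `k`-subset of `U` maximising `∑ f` consists of `k` largest values. -/
theorem Finset.exists_subset_card_eq_forall_le {ι β : Type*} [DecidableEq ι] [AddCommMonoid β]
    [LinearOrder β] [IsOrderedCancelAddMonoid β] (f : ι → β) {U : Finset ι} {k : ℕ}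
    (hk : k ≤ #U) : ∃ T ⊆ U, #T = k ∧ ∀ i ∈ T, ∀ j ∈ U, j ∉ T → f j ≤ f i := by
  obtain ⟨T, hT, hmax⟩ :=
    (powersetCard k U).exists_max_image (fun T => ∑ i ∈ T, f i) (powersetCard_nonempty.2 hk)
  obtain ⟨hTU, hTk⟩ := mem_powersetCard.1 hT
  refine ⟨T, hTU, hTk, fun i hi j hjU hjT => not_lt.1 fun hlt => ?_⟩
  have hj : j ∉ T.erase i := fun h => hjT (mem_of_mem_erase h)
  have hswap : insert j (T.erase i) ∈ powersetCard k U := by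
    refine mem_powersetCard.2 ⟨insert_subset hjU ((erase_subset i T).trans hTU), ?_⟩
    rw [card_insert_of_notMem hj, card_erase_of_mem hi, hTk]
    have : 0 < k := hTk ▸ card_pos.2 ⟨i, hi⟩
    omega
  have := hmax _ hswap
  rw [sum_insert hj, ← add_sum_erase T f hi] at this
  exact absurd this (not_le.2 (add_lt_add_left hlt _))

section LpNorm

variable {E : Type*} [NormedAddCommGroup E] {n : ℕ} {q : ℝ}

theorem lpNormR_nonneg (q : ℝ) (x : Fin n → E) : 0 ≤ lpNormR q x := by
  unfold lpNormR; positivity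

theorem lpNormR_one (x : Fin n → E) : lpNormR 1 x = ∑ i, ‖x i‖ := by
  simp [lpNormR]

theorem lpNormR_mono (hq : 0 < q) {u w : Fin n → E} (h : ∀ i, ‖u i‖ ≤ ‖w i‖) :
    lpNormR q u ≤ lpNormR q w := by
  unfold lpNormR
  gcongr with i
  exact h i

theorem lpNormR_pos {x : Fin n → E} (hx : x ≠ 0) : 0 < lpNormR q x := by
  obtain ⟨i, hi⟩ := Function.ne_iff.1 hx
  unfold lpNormR
  have : 0 < ∑ j, ‖x j‖ ^ q :=
    sum_pos' (fun j _ => by positivity)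
      ⟨i, mem_univ i, Real.rpow_pos_of_pos (norm_pos_iff.2 hi) q⟩
  positivity

theorem lpNormR_smul [NormedSpace ℝ E] (hq : 0 < q) {t : ℝ} (ht : 0 ≤ t) (x : Fin n → E) :
    lpNormR q (t • x) = t * lpNormR q x := by
  simp only [lpNormR, Pi.smul_apply, norm_smul, Real.norm_of_nonneg ht,
    Real.mul_rpow ht (norm_nonneg _), ← mul_sum]
  rw [Real.mul_rpow (by positivity) (by positivity), one_div, Real.rpow_rpow_inv ht hq.ne']

theorem sum_norm_rpow_eq_of_support_subset {T : Finset (Fin n)} {x : Fin n → E} (hq : q ≠ 0)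
    (hx : ∀ i ∉ T, x i = 0) : ∑ i, ‖x i‖ ^ q = ∑ i ∈ T, ‖x i‖ ^ q :=
  (sum_subset (subset_univ T) fun i _ hi => by simp [hx i hi, Real.zero_rpow hq]).symm

theorem lpNormR_le_card_rpow_mul_norm (hq : 0 < q) {T : Finset (Fin n)} {x : Fin n → E}
    (hx : ∀ i ∉ T, x i = 0) : lpNormR q x ≤ (#T : ℝ) ^ (1 / q) * ‖x‖ := by
  have hsum : ∑ i ∈ T, ‖x i‖ ^ q ≤ #T * ‖x‖ ^ q := by
    simpa using sum_le_card_nsmul T _ _ fun i _ =>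
      Real.rpow_le_rpow (norm_nonneg _) (norm_le_pi_norm x i) hq.le
  calc lpNormR q x ≤ (#T * ‖x‖ ^ q) ^ (1 / q) := by
        unfold lpNormR
        rw [sum_norm_rpow_eq_of_support_subset hq.ne' hx]
        gcongr
    _ = (#T : ℝ) ^ (1 / q) * ‖x‖ := by
        rw [Real.mul_rpow (by positivity) (by positivity), one_div,
          Real.rpow_rpow_inv (norm_nonneg _) hq.ne']

theorem sum_norm_le_card_rpow_mul_lpNormR (hq : 1 ≤ q) {T : Finset (Fin n)} {x : Fin n → E}
    (hx : ∀ i ∉ T, x i = 0) : ∑ i, ‖x i‖ ≤ (#T : ℝ) ^ (1 - 1 / q) * lpNormR q x := by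
  have hölder := Real.inner_le_weight_mul_Lp_of_nonneg T hq (fun _ => 1) (fun i => ‖x i‖)
    (fun _ => zero_le_one) (fun i => norm_nonneg _)
  simp only [one_mul, sum_const, nsmul_one] at hölder
  rw [← sum_subset (subset_univ T) fun i _ hi => by simp [hx i hi], lpNormR,
    sum_norm_rpow_eq_of_support_subset (by positivity) hx, one_div]
  exact hölder

end LpNorm

section Restrict

variable {E : Type*} [NormedAddCommGroup E] {n : ℕ} (T : Finset (Fin n)) (x : Fin n → E)

theorem restrictS_add_restrictS_compl : restrictS T x + restrictS Tᶜ x = x := by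
  ext i
  by_cases hi : i ∈ T <;> simp [restrictS, hi]

theorem norm_restrictS_le (i : Fin n) : ‖restrictS T x i‖ ≤ ‖x i‖ := by
  by_cases hi : i ∈ T <;> simp [restrictS, hi]

theorem restrictS_eq_zero_of_notMem {i : Fin n} (hi : i ∉ T) : restrictS T x i = 0 := by
  simp [restrictS, hi]

theorem lpNormR_one_restrictS : lpNormR 1 (restrictS T x) = ∑ i ∈ T, ‖x i‖ := by
  rw [lpNormR_one, ← sum_subset (subset_univ T) fun i _ hi => by simp [restrictS, hi]]
  exact sum_congr rfl fun i hi => by simp [restrictS, hi]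

theorem lpNormR_one_eq_add_compl :
    lpNormR 1 x = lpNormR 1 (restrictS T x) + lpNormR 1 (restrictS Tᶜ x) := by
  rw [lpNormR_one_restrictS, lpNormR_one_restrictS, lpNormR_one, sum_add_sum_compl]

theorem sparsity_le_card {x : Fin n → E} (hx : ∀ i ∉ T, x i = 0) : sparsity x ≤ #T := by
  rw [sparsity, ← Set.ncard_coe_finset]
  exact Set.ncard_le_ncard (fun i hi => by_contra fun h => hi (hx i h)) T.finite_toSet

end Restrict

theorem lpNormR_one_le_of_mem_coneT {E : Type*} [NormedAddCommGroup E] {n s : ℕ} {q ρ : ℝ}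
    (hq : 1 ≤ q) (hρ : 0 < ρ) (hs : 0 < s) {x : Fin n → E} (hx : x ∈ coneT E q ρ s) :
    lpNormR 1 x ≤ (1 + ρ⁻¹) * (s : ℝ) ^ (1 - 1 / q) * lpNormR q x := by
  obtain ⟨S, hS, hcone⟩ := hx
  have hK : (0 : ℝ) < (s : ℝ) ^ (1 - 1 / q) := by positivity
  have hhead :
      lpNormR 1 (restrictS S x) ≤ (s : ℝ) ^ (1 - 1 / q) * lpNormR q (restrictS S x) := by
    rw [lpNormR_one, ← hS]
    exact sum_norm_le_card_rpow_mul_lpNormR hq fun i hi => restrictS_eq_zero_of_notMem S x hi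
  have htail : lpNormR 1 (restrictS Sᶜ x) ≤
      ρ⁻¹ * (s : ℝ) ^ (1 - 1 / q) * lpNormR q (restrictS S x) :=
    calc lpNormR 1 (restrictS Sᶜ x)
        = (ρ / (s : ℝ) ^ (1 - 1 / q))⁻¹ *
            (ρ / (s : ℝ) ^ (1 - 1 / q) * lpNormR 1 (restrictS Sᶜ x)) := by field_simp
      _ ≤ (ρ / (s : ℝ) ^ (1 - 1 / q))⁻¹ * lpNormR q (restrictS S x) := by gcongr
      _ = ρ⁻¹ * (s : ℝ) ^ (1 - 1 / q) * lpNormR q (restrictS S x) := by rw [inv_div]; ring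
  have hS_le : lpNormR q (restrictS S x) ≤ lpNormR q x :=
    lpNormR_mono (by linarith) (norm_restrictS_le S x)
  have : (1 + ρ⁻¹) * (s : ℝ) ^ (1 - 1 / q) * lpNormR q (restrictS S x) ≤
      (1 + ρ⁻¹) * (s : ℝ) ^ (1 - 1 / q) * lpNormR q x := by gcongr
  rw [lpNormR_one_eq_add_compl S]
  linarith

section SigmaSparse

variable {E : Type*} [NormedAddCommGroup E] {n s : ℕ} {q : ℝ}

theorem neg_mem_sigmaSparse {x : Fin n → E} (hx : x ∈ SigmaSparse E q s) :
    -x ∈ SigmaSparse E q s := by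
  simpa [SigmaSparse, sparsity, lpNormR] using hx

theorem single_mem_sigmaSparse (hq : 0 < q) (hs : 0 < s) (i : Fin n) {v : E} (hv : ‖v‖ = 1) :
    Pi.single i v ∈ SigmaSparse E q s := by
  refine ⟨(sparsity_le_card {i} (x := Pi.single i v) fun j hj => by
    simp_all).trans (by simpa using Nat.succ_le_of_lt hs), ?_⟩
  rw [lpNormR, sum_eq_single i (fun j _ hj => by simp [hj, Real.zero_rpow hq.ne'])
    (by simp)]
  simp [hv]

variable [NormedSpace ℝ E]

theorem zero_mem_convexHull_sigmaSparse [Nontrivial E] (hq : 0 < q) (hs : 0 < s) (hn : 0 < n) :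
    (0 : Fin n → E) ∈ convexHull ℝ (SigmaSparse E q s) := by
  obtain ⟨v, hv⟩ := exists_norm_eq E zero_le_one
  have hmem := single_mem_sigmaSparse hq hs ⟨0, hn⟩ hv
  simpa using (convex_convexHull ℝ _) (subset_convexHull ℝ _ hmem)
    (subset_convexHull ℝ _ (neg_mem_sigmaSparse hmem)) (by norm_num : (0 : ℝ) ≤ 1 / 2)
    (by norm_num : (0 : ℝ) ≤ 1 / 2) (by norm_num)

theorem mem_smul_convexHull_sigmaSparse_of_sparsity_le (hq : 0 < q)
    (h0 : (0 : Fin n → E) ∈ convexHull ℝ (SigmaSparse E q s)) {x : Fin n → E}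
    (hx : sparsity x ≤ s) : x ∈ lpNormR q x • convexHull ℝ (SigmaSparse E q s) := by
  rcases eq_or_ne x 0 with rfl | hx0
  · exact Set.zero_mem_smul_set h0
  have hpos : 0 < lpNormR q x := lpNormR_pos hx0
  rw [Set.mem_smul_set_iff_inv_smul_mem₀ hpos.ne']
  refine subset_convexHull ℝ _ ⟨?_, ?_⟩
  · exact (Set.ncard_le_ncard (Function.support_const_smul_subset _ x)
      (Set.toFinite _)).trans hx
  · rw [lpNormR_smul hq (inv_nonneg.2 hpos.le), inv_mul_cancel₀ hpos.ne']

theorem mem_smul_convexHull_sigmaSparse_of_top (hq : 0 < q) (hs : 0 < s)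
    (h0 : (0 : Fin n → E) ∈ convexHull ℝ (SigmaSparse E q s)) {T : Finset (Fin n)}
    {x : Fin n → E} (hT : #T = s) (htop : ∀ i ∈ T, ∀ j ∉ T, ‖x j‖ ≤ ‖x i‖)
    (htail : restrictS Tᶜ x ∈ ((s : ℝ) ^ (1 / q) * ‖restrictS Tᶜ x‖ +
      (s : ℝ) ^ (1 / q - 1) * lpNormR 1 (restrictS Tᶜ x)) • convexHull ℝ (SigmaSparse E q s)) :
    x ∈ (lpNormR q (restrictS T x) + (s : ℝ) ^ (1 / q - 1) * lpNormR 1 x) •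
      convexHull ℝ (SigmaSparse E q s) := by
  have hD := convex_convexHull ℝ (SigmaSparse E q s : Set (Fin n → E))
  have hsR : (0 : ℝ) < s := by exact_mod_cast hs
  have hhead : restrictS T x ∈ lpNormR q (restrictS T x) • convexHull ℝ (SigmaSparse E q s) :=
    mem_smul_convexHull_sigmaSparse_of_sparsity_le hq h0
      (hT ▸ sparsity_le_card T fun i hi => restrictS_eq_zero_of_notMem T x hi)
  have hsup : (s : ℝ) * ‖restrictS Tᶜ x‖ ≤ lpNormR 1 (restrictS T x) := by
    rw [← le_div_iff₀' hsR, pi_norm_le_iff_of_nonneg (div_nonneg (lpNormR_nonneg _ _) hsR.le)]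
    intro j
    by_cases hj : j ∈ T
    · simpa [restrictS, hj] using div_nonneg (lpNormR_nonneg 1 (restrictS T x)) hsR.le
    · rw [le_div_iff₀' hsR, lpNormR_one_restrictS, ← hT]
      simpa using card_nsmul_le_sum T _ _ fun i hi =>
        (norm_restrictS_le Tᶜ x j).trans (htop i hi j hj)
  have hsup' : (s : ℝ) ^ (1 / q) * ‖restrictS Tᶜ x‖ ≤
      (s : ℝ) ^ (1 / q - 1) * lpNormR 1 (restrictS T x) :=
    calc (s : ℝ) ^ (1 / q) * ‖restrictS Tᶜ x‖
        = (s : ℝ) ^ (1 / q - 1) * ((s : ℝ) * ‖restrictS Tᶜ x‖) := by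
          rw [Real.rpow_sub hsR, Real.rpow_one]; field_simp
      _ ≤ (s : ℝ) ^ (1 / q - 1) * lpNormR 1 (restrictS T x) := by gcongr
  have hbound : (s : ℝ) ^ (1 / q) * ‖restrictS Tᶜ x‖ +
      (s : ℝ) ^ (1 / q - 1) * lpNormR 1 (restrictS Tᶜ x) ≤
        (s : ℝ) ^ (1 / q - 1) * lpNormR 1 x := by
    rw [lpNormR_one_eq_add_compl T x, mul_add]
    linarith
  have := Set.add_mem_add hhead (hD.smul_subset_smul_of_le h0
    (add_nonneg (by positivity) (mul_nonneg (by positivity) (lpNormR_nonneg _ _))) hbound htail)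
  rwa [restrictS_add_restrictS_compl, ← hD.add_smul (lpNormR_nonneg _ _)
    (mul_nonneg (by positivity) (lpNormR_nonneg _ _))] at this

theorem mem_smul_convexHull_sigmaSparse_sup_norm (hq : 0 < q) (hs : 0 < s)
    (h0 : (0 : Fin n → E) ∈ convexHull ℝ (SigmaSparse E q s)) (x : Fin n → E) :
    x ∈ ((s : ℝ) ^ (1 / q) * ‖x‖ + (s : ℝ) ^ (1 / q - 1) * lpNormR 1 x) •
      convexHull ℝ (SigmaSparse E q s) := by
  have hD := convex_convexHull ℝ (SigmaSparse E q s : Set (Fin n → E))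
  suffices ∀ U : Finset (Fin n), ∀ x : Fin n → E, (∀ i ∉ U, x i = 0) →
      x ∈ ((s : ℝ) ^ (1 / q) * ‖x‖ + (s : ℝ) ^ (1 / q - 1) * lpNormR 1 x) •
        convexHull ℝ (SigmaSparse E q s) from this univ x (by simp)
  intro U
  induction U using Finset.strongInduction with | H U ih => ?_
  intro x hx
  have hrest : 0 ≤ (s : ℝ) ^ (1 / q - 1) * lpNormR 1 x :=
    mul_nonneg (by positivity) (lpNormR_nonneg _ _)
  by_cases hU : #U ≤ s
  · refine hD.smul_subset_smul_of_le h0 (lpNormR_nonneg q x) ?_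
      (mem_smul_convexHull_sigmaSparse_of_sparsity_le hq h0 ((sparsity_le_card U hx).trans hU))
    calc lpNormR q x ≤ (#U : ℝ) ^ (1 / q) * ‖x‖ := lpNormR_le_card_rpow_mul_norm hq hx
      _ ≤ (s : ℝ) ^ (1 / q) * ‖x‖ := by gcongr
      _ ≤ _ := le_add_of_nonneg_right hrest
  obtain ⟨T, hTU, hT, htop⟩ := exists_subset_card_eq_forall_le (‖x ·‖) (not_le.1 hU).le
  have htop' : ∀ i ∈ T, ∀ j ∉ T, ‖x j‖ ≤ ‖x i‖ := fun i hi j hj =>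
    if hjU : j ∈ U then htop i hi j hjU hj else by simp [hx j hjU]
  have htail := ih (U \ T) (sdiff_ssubset hTU (card_pos.1 (hT ▸ hs))) (restrictS Tᶜ x)
    fun i hi => by
      by_cases hiT : i ∈ T
      · exact restrictS_eq_zero_of_notMem _ x (by simpa using hiT)
      · simp [restrictS, hx i (by simpa [hiT] using hi)]
  refine hD.smul_subset_smul_of_le h0 (add_nonneg (lpNormR_nonneg _ _) hrest) ?_
    (mem_smul_convexHull_sigmaSparse_of_top hq hs h0 hT htop' htail)
  gcongr
  calc lpNormR q (restrictS T x) ≤ (#T : ℝ) ^ (1 / q) * ‖restrictS T x‖ :=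
        lpNormR_le_card_rpow_mul_norm hq fun i hi => restrictS_eq_zero_of_notMem T x hi
    _ ≤ (s : ℝ) ^ (1 / q) * ‖x‖ := by
        rw [hT]
        gcongr
        exact pi_norm_le_iff_of_nonneg (norm_nonneg x) |>.2 fun i =>
          (norm_restrictS_le T x i).trans (norm_le_pi_norm x i)

theorem mem_smul_convexHull_sigmaSparse [Nontrivial E] (hq : 0 < q) (hs : 0 < s) (hsn : s ≤ n)
    (x : Fin n → E) :
    x ∈ (lpNormR q x + (s : ℝ) ^ (1 / q - 1) * lpNormR 1 x) • convexHull ℝ (SigmaSparse E q s) := by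
  have h0 := zero_mem_convexHull_sigmaSparse (E := E) hq hs (hs.trans_le hsn)
  obtain ⟨T, -, hT, htop⟩ :=
    exists_subset_card_eq_forall_le (‖x ·‖) (U := univ) (by simpa using hsn)
  refine (convex_convexHull ℝ _).smul_subset_smul_of_le h0
    (add_nonneg (lpNormR_nonneg _ _) (mul_nonneg (by positivity) (lpNormR_nonneg _ _))) ?_
    (mem_smul_convexHull_sigmaSparse_of_top hq hs h0 hT
      (fun i hi j hj => htop i hi j (mem_univ j) hj)
      (mem_smul_convexHull_sigmaSparse_sup_norm hq hs h0 _))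
  gcongr
  exact lpNormR_mono hq (norm_restrictS_le T x)

end SigmaSparse

/-- the truncated cone `T_{ρ,s}^q ∩ B_{ℓ_q^n}` is contained in
`(2 + ρ⁻¹) D_s^q`, where `D_s^q` is the convex hull of `Σ_s^q`. -/
theorem statement2 (n s : ℕ) (q ρ : ℝ) (hq : 1 ≤ q) (hρ : 0 < ρ) (hs : 1 ≤ s) (hsn : s ≤ n) :
    (coneT ℂ q ρ s : Set (Fin n → ℂ)) ∩ {x | lpNormR q x ≤ 1} ⊆
      (2 + ρ⁻¹) • convexHull ℝ (SigmaSparse ℂ q s : Set (Fin n → ℂ)) := by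
  rintro x ⟨hcone, hball : lpNormR q x ≤ 1⟩
  have hq0 : 0 < q := by linarith
  have hsR : (0 : ℝ) < s := by exact_mod_cast hs
  have hl1 := lpNormR_one_le_of_mem_coneT hq hρ hs hcone
  have hexp : (s : ℝ) ^ (1 / q - 1) * (s : ℝ) ^ (1 - 1 / q) = 1 := by
    rw [← Real.rpow_add hsR, sub_add_sub_cancel, sub_self, Real.rpow_zero]
  refine (convex_convexHull ℝ (SigmaSparse ℂ q s : Set (Fin n → ℂ))).smul_subset_smul_of_le
    (zero_mem_convexHull_sigmaSparse hq0 hs (hs.trans hsn))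
    (add_nonneg (lpNormR_nonneg _ _) (mul_nonneg (by positivity) (lpNormR_nonneg _ _))) ?_
    (mem_smul_convexHull_sigmaSparse hq0 hs hsn x)
  calc lpNormR q x + (s : ℝ) ^ (1 / q - 1) * lpNormR 1 x
      ≤ 1 + (s : ℝ) ^ (1 / q - 1) * ((1 + ρ⁻¹) * (s : ℝ) ^ (1 - 1 / q) * 1) := by
        gcongr
        exact hl1.trans (by gcongr)
    _ = 2 + ρ⁻¹ := by
        rw [mul_one, mul_comm (1 + ρ⁻¹), ← mul_assoc, hexp]
        ring
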